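/- arXiv:1206.5863 — 3 statements merged into one kernel-verified Lean document; each statement's English description precedes it below -/
import Mathlib

section
/- If l ≤ c, then the set C of all words in F^l that differ from a fixed word w in exactly one coordinate has cardinality l(q-1) and is a c-frameproof code, where q = |F|. -/
open Finset

/-- The descendant set of a set of words. -/
def desc {l : ℕ} {F : Type*} (P : Set (Fin l → F)) : Set (Fin l → F) :=
  {x | ∀ i : Fin l, ∃ y ∈ P, x i = y i}

/-- `C` is a `c`-frameproof code of length `l`. -/
def IsFrameproof {l : ℕ} {F : Type*} (c : ℕ) (C : Set (Fin l → F)) : Prop :=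
  ∀ P : Finset (Fin l → F), ↑P ⊆ C → P.card ≤ c → desc ↑P ∩ C = ↑P

/-- Property P(t) with special element `inf`: each codeword has at most `t-1`
coordinates equal to `inf`, and distinct codewords cannot agree in `t`
coordinates all of whose values are not `inf`. -/
def PropertyP {l : ℕ} {S : Type*} [DecidableEq S] (t : ℕ) (inf : S)
    (C : Set (Fin l → S)) : Prop :=
  (∀ x ∈ C, (Finset.univ.filter fun i => x i = inf).card ≤ t - 1) ∧
  ∀ x ∈ C, ∀ y ∈ C, ∀ I : Finset (Fin l), t ≤ I.card →
    (∀ i ∈ I, x i = y i ∧ x i ≠ inf) → x = y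

/-- `A` is an orthogonal array of strength `t` and index 1:
in any `t` distinct rows, every `t`-tuple appears exactly once as a column. -/
def IsOA {l N : ℕ} {S : Type*} (t : ℕ) (A : Fin l → Fin N → S) : Prop :=
  ∀ rows : Fin t → Fin l, Function.Injective rows →
    ∀ v : Fin t → S, ∃! j : Fin N, ∀ k : Fin t, A (rows k) j = v k

/-!
A word at Hamming distance one from `w` is `update w i a` for a unique position `i` and
letter `a ≠ w i`, which gives the count. Such a word is moreover determined by any single
coordinate in which it differs from `w`. A descendant `x` of `P` lying in the code inherits the
coordinate where it leaves `w` from some parent `y ∈ P`, so `x = y`: the code is `c`-frameproof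
for every `c`.
-/

open Function

section HammingDistOne

variable {ι : Type*} {β : ι → Type*}

theorem eq_of_update_eq_update [DecidableEq ι] {w : ∀ i, β i} {i j : ι} {a : β i} {b : β j}
    (ha : a ≠ w i) (h : update w i a = update w j b) : i = j := by
  by_contra hij
  exact ha (by simpa [hij] using congrFun h i)

variable [Fintype ι] [∀ i, DecidableEq (β i)]

theorem exists_apply_ne_of_hammingDist_eq_one {x w : ∀ i, β i} (hx : hammingDist x w = 1) :
    ∃ i, x i ≠ w i :=
  ne_iff.mp (hammingDist_ne_zero.mp (by omega))

variable [DecidableEq ι]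

theorem hammingDist_update_self (w : ∀ i, β i) {i : ι} {a : β i} (ha : a ≠ w i) :
    hammingDist (update w i a) w = 1 := by
  rw [hammingDist, card_eq_one]
  refine ⟨i, ?_⟩
  ext j
  rcases eq_or_ne j i with rfl | hj
  · simp [ha]
  · simp [hj]

theorem eq_update_of_hammingDist_eq_one {x w : ∀ i, β i} (hx : hammingDist x w = 1) {i : ι}
    (hi : x i ≠ w i) : x = update w i (x i) := by
  rw [eq_update_iff]
  refine ⟨rfl, fun j hj => by_contra fun hxj => hj ?_⟩
  have hcard : #{k | x k ≠ w k} ≤ 1 := hx.le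
  exact card_le_one.mp hcard j (by simpa using hxj) i (by simpa using hi)

theorem eq_of_hammingDist_eq_one_of_apply_eq {x y w : ∀ i, β i} (hx : hammingDist x w = 1)
    (hy : hammingDist y w = 1) {i : ι} (hi : x i ≠ w i) (hxy : x i = y i) : x = y := by
  rw [eq_update_of_hammingDist_eq_one hx hi, eq_update_of_hammingDist_eq_one hy (hxy ▸ hi), hxy]

noncomputable def sigmaEquivHammingDistEqOne (w : ∀ i, β i) :
    (Σ i, {a : β i // a ≠ w i}) ≃ {x : ∀ i, β i // hammingDist x w = 1} :=
  Equiv.ofBijective (fun p => ⟨update w p.1 p.2, hammingDist_update_self w p.2.2⟩) <| by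
    constructor
    · rintro ⟨i, a, ha⟩ ⟨j, b, hb⟩ h
      obtain rfl := eq_of_update_eq_update ha (congrArg Subtype.val h)
      obtain rfl := update_injective w i (congrArg Subtype.val h)
      rfl
    · rintro ⟨x, hx⟩
      obtain ⟨i, hi⟩ := exists_apply_ne_of_hammingDist_eq_one hx
      exact ⟨⟨i, x i, hi⟩, Subtype.ext (eq_update_of_hammingDist_eq_one hx hi).symm⟩

theorem ncard_hammingDist_eq_one [∀ i, Fintype (β i)] (w : ∀ i, β i) :
    {x : ∀ i, β i | hammingDist x w = 1}.ncard = ∑ i, (Fintype.card (β i) - 1) := by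
  rw [← Nat.card_coe_set_eq, Set.coe_ofPred, ← Nat.card_congr (sigmaEquivHammingDistEqOne w),
    Nat.card_eq_fintype_card, Fintype.card_sigma]
  simp [Fintype.card_subtype_compl]

end HammingDistOne

theorem subset_desc {l : ℕ} {F : Type*} (P : Set (Fin l → F)) : P ⊆ desc P :=
  fun x hx _ => ⟨x, hx, rfl⟩

theorem isFrameproof_hammingDist_eq_one {l : ℕ} {F : Type*} [DecidableEq F] (c : ℕ)
    (w : Fin l → F) : IsFrameproof c {x | hammingDist x w = 1} := by
  intro P hP _
  refine Set.Subset.antisymm ?_ fun x hx => ⟨subset_desc _ hx, hP hx⟩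
  rintro x ⟨hdesc, hx⟩
  obtain ⟨i, hi⟩ := exists_apply_ne_of_hammingDist_eq_one hx
  obtain ⟨y, hyP, hxy⟩ := hdesc i
  rwa [eq_of_hammingDist_eq_one_of_apply_eq hx (hP hyP) hi hxy]

theorem frameproof_hamming_one_general {l c q : ℕ} {F : Type*} [Fintype F] [DecidableEq F]
    (hq : Fintype.card F = q)
    (w : Fin l → F) :
    Set.ncard {x : Fin l → F | (Finset.univ.filter fun i => x i ≠ w i).card = 1}
      = l * (q - 1) ∧
    IsFrameproof c {x : Fin l → F | (Finset.univ.filter fun i => x i ≠ w i).card = 1} := by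
  refine ⟨?_, isFrameproof_hammingDist_eq_one c w⟩
  change {x : Fin l → F | hammingDist x w = 1}.ncard = _
  simp [ncard_hammingDist_eq_one, hq]

/-- If `l ≤ c`, the set of words differing from a fixed word `w` in exactly one
coordinate has cardinality `l * (q - 1)` and is `c`-frameproof. -/
theorem frameproof_hamming_one {l c q : ℕ} {F : Type*} [Fintype F] [DecidableEq F]
    (hq : Fintype.card F = q) (hq2 : 2 ≤ q) (hl : 1 ≤ l) (hlc : l ≤ c)
    (w : Fin l → F) :
    Set.ncard {x : Fin l → F | (Finset.univ.filter fun i => x i ≠ w i).card = 1}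
      = l * (q - 1) ∧
    IsFrameproof c {x : Fin l → F | (Finset.univ.filter fun i => x i ≠ w i).card = 1} :=
  frameproof_hamming_one_general hq w
end

section
/- Let C ⊆ S^l be an s-ary c-frameproof code of length l of cardinality M satisfying Property P(t) with special element ∞, where m is a prime power with m ≥ l-1, 2t-1 ≤ l, c ≥ t, and l = c(t-1)+r for some r with t ≤ r ≤ c. Then there exists a c-frameproof code of length l over an alphabet of size q = (s-1)m+1 with cardinality M·m^t. -/
/-!
A codeword `x ∈ C` and a polynomial `p` of degree `< t` over `𝔽_m` are combined coordinatewise: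
coordinate `i` becomes `∞` if `x i = ∞` and `(x i, p (α i))` otherwise, where `α` embeds the
`l ≤ m + 1` coordinates into the projective line over `𝔽_m`. The new code again has Property P(t):
two words agreeing in `t` non-`∞` places have the same outer word by P(t) for `C`, and the same
polynomial because a nonzero polynomial of degree `< t` has fewer than `t` projective zeros.
Property P(t) in turn gives `c`-frameproofness once every word has more than `c (t - 1)`
non-`∞` coordinates: by pigeonhole, a descendant of at most `c` codewords agrees with one of them
in `t` non-`∞` places, hence equals it.
-/

open Finset

open Polynomial

theorem IsFrameproof.image_equiv {l c : ℕ} {A B : Type*} (e : A ≃ B) {C : Set (Fin l → A)}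
    (hC : IsFrameproof c C) : IsFrameproof c ((e ∘ ·) '' C) := by
  classical
  intro P hP hPc
  have hP' : ↑(P.image (e.symm ∘ ·)) ⊆ C := by
    rintro _ hy
    obtain ⟨w, hw, rfl⟩ := Finset.mem_coe.1 hy |> Finset.mem_image.1
    obtain ⟨x, hx, rfl⟩ := hP hw
    simpa [Function.comp_def] using hx
  have key := hC _ hP' (card_image_le.trans hPc)
  refine subset_antisymm ?_ fun z hz => ⟨fun i => ⟨z, hz, rfl⟩, hP hz⟩
  rintro _ ⟨hdesc, x, hx, rfl⟩
  have hx' : x ∈ desc ↑(P.image (e.symm ∘ ·)) ∩ C := by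
    refine ⟨fun i => ?_, hx⟩
    obtain ⟨y, hy, hyi⟩ := hdesc i
    exact ⟨e.symm ∘ y, Finset.mem_image_of_mem _ hy, by simp [← hyi]⟩
  rw [key, coe_image] at hx'
  obtain ⟨w, hw, rfl⟩ := hx'
  simpa [Function.comp_def] using hw

theorem IsFrameproof.eq_empty_of_length_zero {c : ℕ} {F : Type*} {C : Set (Fin 0 → F)}
    (hC : IsFrameproof c C) : C = ∅ := by
  have h := hC ∅ (by simp) (Nat.zero_le c)
  have hdesc : desc (∅ : Set (Fin 0 → F)) = Set.univ := Set.eq_univ_of_forall fun _ i => i.elim0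
  simpa [hdesc] using h

theorem isFrameproof_empty {l c : ℕ} {F : Type*} : IsFrameproof c (∅ : Set (Fin l → F)) := by
  intro P hP _
  simp [Set.subset_empty_iff.1 hP]

section PropertyP

variable {l t : ℕ} {S : Type*} [DecidableEq S] {inf : S} {C : Set (Fin l → S)}

theorem PropertyP.sub_le_card_filter_ne (hP : PropertyP t inf C) {x : Fin l → S} (hx : x ∈ C) :
    l - (t - 1) ≤ #{i | x i ≠ inf} := by
  have := hP.1 x hx
  have := card_filter_add_card_filter_not (s := univ) (fun i => x i = inf)
  simp only [card_univ, Fintype.card_fin] at this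
  simp only [ne_eq]
  omega

theorem PropertyP.isFrameproof {c : ℕ} (hP : PropertyP t inf C) (hl : (c + 1) * (t - 1) < l) :
    IsFrameproof c C := by
  intro P hPC hPc
  refine subset_antisymm ?_ fun z hz => ⟨fun i => ⟨z, hz, rfl⟩, hPC hz⟩
  rintro z ⟨hzP, hzC⟩
  choose g hgP hg using hzP
  have hcard : #P * (t - 1) < #{i | z i ≠ inf} := by
    have := hP.sub_le_card_filter_ne hzC
    have := Nat.mul_le_mul_right (t - 1) hPc
    rw [add_one_mul] at hl
    omega
  obtain ⟨w, hwP, hw⟩ := exists_lt_card_fiber_of_mul_lt_card_of_maps_to (fun i _ => hgP i) hcard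
  rw [filter_filter] at hw
  have hzw : z = w := hP.2 z hzC w (hPC hwP) {i | z i ≠ inf ∧ g i = w} (by omega) fun i hi => by
    simp only [mem_filter, mem_univ, true_and] at hi
    exact ⟨hi.2 ▸ hg i, hi.1⟩
  exact hzw ▸ hwP

end PropertyP

def DeterminedByAnyCoords {V ι K : Type*} (t : ℕ) (f : V → ι → K) : Prop :=
  ∀ v w : V, ∀ I : Finset ι, t ≤ #I → (∀ i ∈ I, f v i = f w i) → v = w

section Concatenation

variable {l t : ℕ} {S K V : Type*} [DecidableEq S] {inf : S}

/-- The values form the paper's alphabet of size `(s - 1) m + 1`, with `none` as its `∞`. -/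
def concatWord (inf : S) (x : Fin l → S) (y : Fin l → K) :
    Fin l → Option ({a // a ≠ inf} × K) :=
  fun i => if h : x i = inf then none else some (⟨x i, h⟩, y i)

def concatCode (inf : S) (C : Set (Fin l → S)) (f : V → Fin l → K) :
    Set (Fin l → Option ({a // a ≠ inf} × K)) :=
  Set.image2 (fun x v => concatWord inf x (f v)) C Set.univ

theorem concatWord_eq_none_iff {x : Fin l → S} {y : Fin l → K} {i : Fin l} :
    concatWord inf x y i = none ↔ x i = inf := by
  unfold concatWord
  split_ifs with h <;> simp [h]

theorem eq_and_eq_of_concatWord_eq {x x' : Fin l → S} {y y' : Fin l → K} {i : Fin l}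
    (hx : x i ≠ inf) (h : concatWord inf x y i = concatWord inf x' y' i) :
    x i = x' i ∧ y i = y' i := by
  by_cases hx' : x' i = inf
  · simp [concatWord, hx, hx'] at h
  · simp only [concatWord, hx, hx', dite_false, Option.some.injEq, Prod.mk.injEq,
      Subtype.mk.injEq] at h
    exact h

variable {C : Set (Fin l → S)} {f : V → Fin l → K}

theorem PropertyP.eq_and_eq_of_concatWord_agree (hP : PropertyP t inf C)
    (hf : DeterminedByAnyCoords t f) {x x' : Fin l → S} {v v' : V} (hx : x ∈ C) (hx' : x' ∈ C)
    {I : Finset (Fin l)} (hI : t ≤ #I) (hIinf : ∀ i ∈ I, x i ≠ inf)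
    (h : ∀ i ∈ I, concatWord inf x (f v) i = concatWord inf x' (f v') i) : x = x' ∧ v = v' := by
  have hagree i (hi : i ∈ I) := eq_and_eq_of_concatWord_eq (hIinf i hi) (h i hi)
  exact ⟨hP.2 x hx x' hx' I hI fun i hi => ⟨(hagree i hi).1, hIinf i hi⟩,
    hf v v' I hI fun i hi => (hagree i hi).2⟩

theorem PropertyP.concatCode [DecidableEq K] (hP : PropertyP t inf C)
    (hf : DeterminedByAnyCoords t f) : PropertyP t none (concatCode inf C f) := by
  constructor
  · rintro _ ⟨x, hx, v, -, rfl⟩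
    simpa only [concatWord_eq_none_iff] using hP.1 x hx
  · rintro _ ⟨x, hx, v, -, rfl⟩ _ ⟨x', hx', v', -, rfl⟩ I hI h
    have hIinf i (hi : i ∈ I) : x i ≠ inf := concatWord_eq_none_iff.not.1 (h i hi).2
    obtain ⟨rfl, rfl⟩ := hP.eq_and_eq_of_concatWord_agree hf hx hx' hI hIinf fun i hi => (h i hi).1
    rfl

theorem ncard_concatCode (hP : PropertyP t inf C) (hf : DeterminedByAnyCoords t f)
    (hl : 2 * t - 1 ≤ l) : (concatCode inf C f).ncard = C.ncard * Nat.card V := by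
  have hinj : Set.InjOn (Function.uncurry fun x v => concatWord inf x (f v)) (C ×ˢ Set.univ) := by
    rintro ⟨x, v⟩ ⟨hx, -⟩ ⟨x', v'⟩ ⟨hx', -⟩ h
    have hI : t ≤ #{i | x i ≠ inf} := by
      have := hP.sub_le_card_filter_ne (x := x) hx
      omega
    obtain ⟨rfl, rfl⟩ := hP.eq_and_eq_of_concatWord_agree hf hx hx' hI
      (fun i hi => (mem_filter.1 hi).2) fun i _ => congrFun h i
    rfl
  rw [concatCode, ← Set.image_uncurry_prod, hinj.ncard_image, Set.ncard_prod,
    Set.ncard_univ]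

end Concatenation

section ProjectiveEvaluation

variable {K : Type*} [Field K] {t : ℕ}

/-- Evaluation on the projective line `Option K`: at the point at infinity `none`, a polynomial
of degree `< t` takes its coefficient of `X ^ (t - 1)`. -/
def projEval (t : ℕ) (p : K[X]) : Option K → K
  | none => p.coeff (t - 1)
  | some a => p.eval a

theorem eq_of_projEval_eq_on {p q : K[X]} (hp : p ∈ degreeLT K t) (hq : q ∈ degreeLT K t)
    {A : Finset (Option K)} (hA : t ≤ #A) (h : ∀ a ∈ A, projEval t p a = projEval t q a) :
    p = q := by
  refine eq_of_degree_sub_lt_of_eval_finset_eq A.eraseNone ?_ fun a ha => h _ (mem_eraseNone.1 ha)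
  have hpq : (p - q).degree < t := mem_degreeLT.1 (sub_mem hp hq)
  by_cases hinf : none ∈ A
  · have hcoeff : (p - q).coeff (t - 1) = 0 := by
      simpa [projEval, sub_eq_zero] using h none hinf
    rw [card_eraseNone_of_mem hinf, degree_lt_iff_coeff_zero] at *
    intro n hn
    obtain rfl | hn := (by omega : n = t - 1 ∨ t ≤ n)
    exacts [hcoeff, hpq n hn]
  · rw [card_eraseNone_of_not_mem hinf]
    exact hpq.trans_le (by exact_mod_cast hA)

theorem determinedByAnyCoords_projEval {ι : Type*} (e : ι ↪ Option K) :
    DeterminedByAnyCoords t fun p : degreeLT K t => projEval t p ∘ e := by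
  intro p q I hI h
  refine Subtype.ext (eq_of_projEval_eq_on p.2 q.2 (A := I.map e) (by simpa using hI) ?_)
  simpa using h

end ProjectiveEvaluation

theorem frameproof_recursive_general {l s t c r M m q : ℕ} (S : Type*) [Fintype S]
    [DecidableEq S] (hs : Fintype.card S = s) (inf : S) (C : Set (Fin l → S))
    (hC : IsFrameproof c C) (hP : PropertyP t inf C) (hM : C.ncard = M)
    (hm : ∃ p k : ℕ, p.Prime ∧ 0 < k ∧ m = p ^ k)
    (hml : l - 1 ≤ m) (hlt : 2 * t - 1 ≤ l)
    (hl : l = c * (t - 1) + r) (hr1 : t ≤ r)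
    (hq : q = (s - 1) * m + 1) :
    ∃ (Q : Type) (_ : Fintype Q), Fintype.card Q = q ∧
      ∃ C' : Set (Fin l → Q), IsFrameproof c C' ∧ C'.ncard = M * m ^ t := by
  classical
  obtain ⟨p, k, hp, hk, rfl⟩ := hm
  have := Fact.mk hp
  let K := GaloisField p k
  let : Fintype K := Fintype.ofFinite K
  have hK : Fintype.card K = p ^ k := by
    rw [← Nat.card_eq_fintype_card]
    exact GaloisField.card p k hk.ne'
  obtain ⟨e⟩ : Nonempty (Fin l ↪ Option K) := Function.Embedding.nonempty_of_card_le <| by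
    simp only [Fintype.card_fin, Fintype.card_option, hK]
    omega
  let f : degreeLT K t → Fin l → K := fun v => projEval t v ∘ e
  have hf : DeterminedByAnyCoords t f := determinedByAnyCoords_projEval e
  have hQ : Fintype.card (Option ({a // a ≠ inf} × K)) = q := by
    rw [hq, Fintype.card_option, Fintype.card_prod, Fintype.card_subtype_compl,
      Fintype.card_subtype_eq, hs, hK]
  let σ := Fintype.equivFinOfCardEq hQ
  refine ⟨Fin q, inferInstance, Fintype.card_fin q, (σ ∘ ·) '' concatCode inf C f, ?_, ?_⟩
  · refine IsFrameproof.image_equiv σ ?_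
    rcases Nat.eq_zero_or_pos l with rfl | hl0
    · simp [hC.eq_empty_of_length_zero, concatCode, isFrameproof_empty]
    · refine (hP.concatCode hf).isFrameproof ?_
      rw [add_one_mul]
      rcases Nat.eq_zero_or_pos t with rfl | ht
      · simpa using hl0
      · omega
  · rw [Set.ncard_image_of_injective _ σ.injective.comp_left, ncard_concatCode hP hf hlt, hM,
      Nat.card_congr (degreeLTEquiv K t).toEquiv, Nat.card_fun, Nat.card_eq_fintype_card, hK,
      Nat.card_fin]

/-- Recursive construction: from an `s`-ary `c`-frameproof code with Property P(t)
of cardinality `M`, and a prime power `m ≥ l - 1`, obtain a `c`-frameproof code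
over an alphabet of size `q = (s-1)m + 1` with cardinality `M * m^t`. -/
theorem frameproof_recursive {l s t c r M m q : ℕ} (S : Type*) [Fintype S]
    [DecidableEq S] (hs : Fintype.card S = s) (inf : S) (C : Set (Fin l → S))
    (hC : IsFrameproof c C) (hP : PropertyP t inf C) (hM : C.ncard = M)
    (hm : ∃ p k : ℕ, p.Prime ∧ 0 < k ∧ m = p ^ k)
    (hml : l - 1 ≤ m) (hlt : 2 * t - 1 ≤ l) (htc : t ≤ c)
    (hl : l = c * (t - 1) + r) (hr1 : t ≤ r) (hr2 : r ≤ c)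
    (hq : q = (s - 1) * m + 1) :
    ∃ (Q : Type) (_ : Fintype Q), Fintype.card Q = q ∧
      ∃ C' : Set (Fin l → Q), IsFrameproof c C' ∧ C'.ncard = M * m ^ t :=
  frameproof_recursive_general S hs inf C hC hP hM hm hml hlt hl hr1 hq
end

section
/- For every odd integer q > 1, there exists a q-ary 2-frameproof code of length 4 with cardinality 2(q-1)^2 + 1. -/
open Finset

/-!
Write `q = 2m + 1` and read the nonzero symbols as pairs `(e, a) ∈ ZMod 2 × ZMod m`. For each
position `i` and each `(e, u, v)` take the word that is `0` at `i` and carries the symbols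
`(b i j + e, a_j)` at the other three positions `j`, where `(a_j)` lists `u, v, -(u + v)` and
`b` is a fixed bit table; together with the zero word this gives `8m² + 1` words. Two words never
agree in two nonzero positions: within a class, two entries of a zero-sum triple determine it, and
across classes the table `b` forbids it. A code with this property whose words have at most one
zero is 2-frameproof once the zero word is added: among the three nonzero positions of a
descendant of two codewords, two come from the same parent.
-/

open Finset

section PropertyP

variable {l t c : ℕ} {S : Type*} [DecidableEq S] {inf : S} {C : Set (Fin l → S)}
  {P : Finset (Fin l → S)}

theorem const_mem_of_mem_desc (hC : PropertyP t inf C) (hP : ↑P ⊆ insert (fun _ => inf) C)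
    (hl : #P * (t - 1) < l) (hz : (fun _ => inf) ∈ desc (P : Set (Fin l → S))) :
    (fun _ => inf) ∈ P := by
  by_contra hinf
  have hPC : ∀ y ∈ P, y ∈ C := fun y hy =>
    (hP hy).resolve_left fun h => hinf (h ▸ hy)
  set B := P.biUnion fun y => univ.filter fun i => y i = inf
  have hB : #B < #(univ : Finset (Fin l)) := by
    calc #B ≤ #P * (t - 1) := card_biUnion_le_card_mul _ _ _ fun y hy => hC.1 y (hPC y hy)
      _ < _ := by simpa using hl
  obtain ⟨i, -, hiB⟩ := exists_mem_notMem_of_card_lt_card hB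
  obtain ⟨y, hy, hyi⟩ := hz i
  exact hiB (mem_biUnion.2 ⟨y, hy, by simpa using hyi.symm⟩)

theorem mem_of_mem_desc_of_propertyP (hC : PropertyP t inf C)
    (hP : ↑P ⊆ insert (fun _ => inf) C) (hl : #P * (t - 1) + (t - 1) < l) {z : Fin l → S}
    (hzC : z ∈ C) (hz : z ∈ desc (P : Set (Fin l → S))) : z ∈ P := by
  choose f hfP hfz using hz
  have hN : #P * (t - 1) < #(univ.filter fun i => z i ≠ inf) := by
    have hsplit := card_filter_add_card_filter_not (s := univ) fun i => z i = inf
    simp only [card_univ, Fintype.card_fin, ← ne_eq] at hsplit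
    have := hC.1 z hzC
    omega
  obtain ⟨y, hyP, hy⟩ :=
    exists_lt_card_fiber_of_mul_lt_card_of_maps_to (fun i _ => hfP i) hN
  set I := (univ.filter fun i => z i ≠ inf).filter fun i => f i = y
  have hagree : ∀ i ∈ I, z i = y i ∧ z i ≠ inf := by
    intro i hi
    obtain ⟨hiN, rfl⟩ := mem_filter.1 hi
    exact ⟨hfz i, (mem_filter.1 hiN).2⟩
  rcases hP hyP with rfl | hyC
  · obtain ⟨i, hi⟩ := card_pos.1 (Nat.zero_lt_of_lt hy)
    exact absurd (hagree i hi).1 (hagree i hi).2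
  · rwa [hC.2 z hzC y hyC I (by omega) hagree]

theorem isFrameproof_insert_const_of_propertyP (hC : PropertyP t inf C)
    (hl : (c + 1) * (t - 1) < l) : IsFrameproof c (insert (fun _ => inf) C) := by
  intro P hP hc
  have hPc : #P * (t - 1) ≤ c * (t - 1) := Nat.mul_le_mul_right _ hc
  rw [add_one_mul] at hl
  refine subset_antisymm ?_ fun x hx => ⟨fun i => ⟨x, hx, rfl⟩, hP hx⟩
  rintro z ⟨hz, rfl | hzC⟩
  · exact const_mem_of_mem_desc hC hP (by omega) hz
  · exact mem_of_mem_desc_of_propertyP hC hP (by omega) hzC hz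

end PropertyP

section Construction

variable {A F : Type*} [AddCommGroup A]

/-- Chosen so that for classes `i ≠ i'` the differences `classBit i j - classBit i' j` at the two
positions `j ∉ {i, i'}` differ. -/
def classBit : Fin 4 → Fin 4 → ZMod 2 :=
  ![![0, 0, 0, 0], ![0, 0, 0, 1], ![0, 1, 0, 0], ![0, 0, 1, 0]]

theorem classBit_sub_ne : ∀ i i' j k : Fin 4, i ≠ i' → j ≠ k → j ≠ i → j ≠ i' → k ≠ i → k ≠ i' →
    classBit i j - classBit i' j ≠ classBit i k - classBit i' k := by
  decide

def zeroSumTriple (u v : A) : Fin 3 → A :=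
  ![u, v, -(u + v)]

theorem zeroSumTriple_eq_of_eq_of_eq {u v u' v' : A} {r s : Fin 3} (hrs : r ≠ s)
    (hr : zeroSumTriple u v r = zeroSumTriple u' v' r)
    (hs : zeroSumTriple u v s = zeroSumTriple u' v' s) : u = u' ∧ v = v' := by
  fin_cases r <;> fin_cases s <;> simp_all [zeroSumTriple]

variable (sym : ZMod 2 × A → F) (inf : F)

def codeword (p : Fin 4 × ZMod 2 × A × A) : Fin 4 → F :=
  Fin.insertNth p.1 inf fun r =>
    sym (classBit p.1 (p.1.succAbove r) + p.2.1, zeroSumTriple p.2.2.1 p.2.2.2 r)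

variable {sym inf}

theorem codeword_apply_self (p : Fin 4 × ZMod 2 × A × A) : codeword sym inf p p.1 = inf :=
  Fin.insertNth_apply_same ..

theorem codeword_apply_succAbove (p : Fin 4 × ZMod 2 × A × A) (r : Fin 3) :
    codeword sym inf p (p.1.succAbove r) =
      sym (classBit p.1 (p.1.succAbove r) + p.2.1, zeroSumTriple p.2.2.1 p.2.2.2 r) :=
  Fin.insertNth_apply_succAbove ..

theorem codeword_eq_inf_iff (hinf : ∀ s, sym s ≠ inf) (p : Fin 4 × ZMod 2 × A × A) (j : Fin 4) :
    codeword sym inf p j = inf ↔ j = p.1 := by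
  refine ⟨fun hj => ?_, fun hj => hj ▸ codeword_apply_self p⟩
  by_contra hne
  obtain ⟨r, rfl⟩ := Fin.exists_succAbove_eq hne
  exact hinf _ (codeword_apply_succAbove p r ▸ hj)

/-- The bits separate different classes, the zero-sum triple separates words of one class. -/
theorem codeword_eq_of_eq_of_eq (hsym : Function.Injective sym) (hinf : ∀ s, sym s ≠ inf)
    {p p' : Fin 4 × ZMod 2 × A × A} {j k : Fin 4} (hjk : j ≠ k)
    (hj0 : codeword sym inf p j ≠ inf) (hk0 : codeword sym inf p k ≠ inf)
    (hj : codeword sym inf p j = codeword sym inf p' j)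
    (hk : codeword sym inf p k = codeword sym inf p' k) : p = p' := by
  have hpos : ∀ {n}, codeword sym inf p n ≠ inf → codeword sym inf p n = codeword sym inf p' n →
      n ≠ p.1 ∧ n ≠ p'.1 := fun h0 h =>
    ⟨mt (codeword_eq_inf_iff hinf p _).2 h0, mt (codeword_eq_inf_iff hinf p' _).2 (h ▸ h0)⟩
  obtain ⟨hji, hji'⟩ := hpos hj0 hj
  obtain ⟨hki, hki'⟩ := hpos hk0 hk
  obtain ⟨i, e, u, v⟩ := p
  obtain ⟨i', e', u', v'⟩ := p'
  obtain ⟨r, rfl⟩ := Fin.exists_succAbove_eq hji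
  obtain ⟨s, rfl⟩ := Fin.exists_succAbove_eq hki
  obtain ⟨r', hr'⟩ := Fin.exists_succAbove_eq hji'
  obtain ⟨s', hs'⟩ := Fin.exists_succAbove_eq hki'
  rw [codeword_apply_succAbove, ← hr', codeword_apply_succAbove] at hj
  rw [codeword_apply_succAbove, ← hs', codeword_apply_succAbove] at hk
  simp only [hr', hs'] at hj hk
  obtain ⟨hje, hjz⟩ := Prod.mk.inj (hsym hj)
  obtain ⟨hke, hkz⟩ := Prod.mk.inj (hsym hk)
  obtain rfl | hii := eq_or_ne i i'
  · obtain rfl := Fin.succAbove_right_injective hr'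
    obtain rfl := Fin.succAbove_right_injective hs'
    obtain ⟨rfl, rfl⟩ := zeroSumTriple_eq_of_eq_of_eq (ne_of_apply_ne _ hjk) hjz hkz
    rw [add_left_cancel hje]
  · exact absurd (by linear_combination hje - hke)
      (classBit_sub_ne i i' _ _ hii hjk hji hji' hki hki')

theorem propertyP_range_codeword [DecidableEq F] (hsym : Function.Injective sym)
    (hinf : ∀ s, sym s ≠ inf) :
    PropertyP 2 inf (Set.range (codeword sym inf)) := by
  refine ⟨?_, ?_⟩
  · rintro _ ⟨p, rfl⟩
    simp [codeword_eq_inf_iff hinf, filter_eq']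
  · rintro _ ⟨p, rfl⟩ _ ⟨p', rfl⟩ I hI hagree
    obtain ⟨j, hj, k, hk, hjk⟩ := one_lt_card.1 hI
    rw [codeword_eq_of_eq_of_eq hsym hinf hjk (hagree j hj).2 (hagree k hk).2 (hagree j hj).1
      (hagree k hk).1]

theorem codeword_injective (hsym : Function.Injective sym) (hinf : ∀ s, sym s ≠ inf) :
    Function.Injective (codeword sym inf) := fun p p' h =>
  codeword_eq_of_eq_of_eq hsym hinf (p.1.succAbove_right_injective.ne (by decide : (0 : Fin 3) ≠ 1))
    (by simp [codeword_apply_succAbove, hinf]) (by simp [codeword_apply_succAbove, hinf])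
    (congrFun h _) (congrFun h _)

theorem const_notMem_range_codeword (hinf : ∀ s, sym s ≠ inf) :
    (fun _ => inf) ∉ Set.range (codeword sym inf) := by
  rintro ⟨p, hp⟩
  exact hinf _ ((codeword_apply_succAbove p 0).symm.trans (congrFun hp _))

theorem ncard_insert_const_range_codeword [Finite A] (hsym : Function.Injective sym)
    (hinf : ∀ s, sym s ≠ inf) :
    (insert (fun _ => inf) (Set.range (codeword sym inf))).ncard = 8 * Nat.card A ^ 2 + 1 := by
  rw [Set.ncard_insert_of_notMem (const_notMem_range_codeword hinf),
    Set.ncard_range_of_injective (codeword_injective hsym hinf)]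
  simp only [Nat.card_prod, Nat.card_eq_fintype_card, Fintype.card_fin, ZMod.card]
  ring

end Construction

/-- For every odd `q > 1` there is a `q`-ary 2-frameproof code of length 4 with
cardinality `2(q-1)^2 + 1`. -/
theorem exists_frameproof_c2_l4 (q : ℕ) (hodd : q % 2 = 1) (hq : 1 < q) :
    ∃ C : Set (Fin 4 → Fin q), IsFrameproof 2 C ∧
      C.ncard = 2 * (q - 1) ^ 2 + 1 := by
  obtain ⟨m, rfl⟩ : ∃ m, q = 2 * m + 1 := ⟨q / 2, by omega⟩
  have : NeZero m := ⟨by omega⟩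
  let sym : ZMod 2 × ZMod m → Fin (2 * m + 1) :=
    Fin.succ ∘ Fintype.equivFinOfCardEq (by simp [ZMod.card])
  have hsym : Function.Injective sym := (Fin.succ_injective _).comp (Equiv.injective _)
  have hinf : ∀ s, sym s ≠ 0 := fun _ => Fin.succ_ne_zero _
  refine ⟨_, isFrameproof_insert_const_of_propertyP (propertyP_range_codeword hsym hinf)
    (by norm_num), ?_⟩
  rw [ncard_insert_const_range_codeword hsym hinf, Nat.card_zmod, Nat.add_sub_cancel]
  ring
end
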